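/- arXiv:2103.03112 — 5 statements merged into one kernel-verified Lean document; each statement's English description precedes it below -/
import Mathlib

section
/- Let 1 < p < ∞ and let v be a weight on a σ-finite filtered measure space such that v and v^{1-p'} are integrable over every set of finite measure in every F_i. Suppose there is a constant C > 0 such that ||Mf||_{L^p(v)} ≤ C ||f||_{L^p(v)} for every function f in the class L. Then v is an A_p weight, and moreover for every i ∈ ℤ the inequality E_i(v)·E_i(v^{1-p'})^{p-1} ≤ C^p holds μ-almost everywhere; in particular [v]_{A_p} ≤ C^p. -/
/-!
Test the maximal inequality with `f = 1_S σ`, where `σ = v ^ (1 - p')` is the dual weight, for an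
`ℱ i`-measurable set `S`. Since `σ ^ p * v = σ`, the right-hand side is `C ^ p ∫_S σ`, while the
maximal function dominates `E_i(1_S σ) = 1_S E_i σ`; pulling the `ℱ i`-measurable factor
`(E_i σ) ^ p` out of the conditional expectation turns the left-hand side into
`∫_S (E_i σ) ^ p E_i v`. As `S` is arbitrary, `(E_i σ) ^ p E_i v ≤ C ^ p E_i σ` a.e., and dividing
by `E_i σ` gives the `A_p` condition.
-/

open MeasureTheory

theorem Real.HolderConjugate.rpow_one_sub_rpow_mul_self {p q x : ℝ} (h : p.HolderConjugate q)
    (hx : 0 ≤ x) : (x ^ (1 - q)) ^ p * x = x ^ (1 - q) := by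
  have hq : 1 - q ≠ 0 := by linarith [h.symm.lt]
  rcases hx.eq_or_lt with rfl | hx
  · simp [Real.zero_rpow hq]
  · rw [← Real.rpow_mul hx.le, ← Real.rpow_add_one hx.ne']
    congr 1
    linear_combination -h.mul_eq_add

theorem mul_rpow_sub_one_le_of_rpow_mul_le {a b K p : ℝ} (hp : p ≠ 1) (ha : 0 ≤ a) (hK : 0 ≤ K)
    (h : a ^ p * b ≤ K * a) : b * a ^ (p - 1) ≤ K := by
  rcases ha.eq_or_lt with rfl | ha
  · simpa [Real.zero_rpow (sub_ne_zero.2 hp)] using hK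
  · refine le_of_mul_le_mul_right ?_ ha
    rwa [mul_assoc, ← Real.rpow_add_one ha.ne', sub_add_cancel, mul_comm]

namespace MeasureTheory

variable {Ω : Type*} {m m0 : MeasurableSpace Ω} {μ : Measure Ω}

theorem ae_le_of_forall_setIntegral_le_of_stronglyMeasurable (hm : m ≤ m0) {f g : Ω → ℝ}
    (hf : StronglyMeasurable[m] f) (hg : StronglyMeasurable[m] g) (hfi : Integrable f μ)
    (hgi : Integrable g μ)
    (hle : ∀ s, MeasurableSet[m] s → ∫ x in s, f x ∂μ ≤ ∫ x in s, g x ∂μ) : f ≤ᵐ[μ] g := by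
  refine ae_le_of_ae_le_trim (ae_le_of_forall_setIntegral_le (hfi.trim hm hf) (hgi.trim hm hg)
    fun s hs _ => ?_)
  rw [← setIntegral_trim hm hf hs, ← setIntegral_trim hm hg hs]
  exact hle s hs

theorem Integrable.mul_condExp_of_stronglyMeasurable_left {f g : Ω → ℝ}
    (hf : StronglyMeasurable[m] f) (hfg : Integrable (f * g) μ) (hg : Integrable g μ) :
    Integrable (f * μ[g|m]) μ :=
  integrable_condExp.congr (condExp_mul_of_stronglyMeasurable_left hf hfg hg)

theorem integral_mul_condExp_of_stronglyMeasurable_left (hm : m ≤ m0) [SigmaFinite (μ.trim hm)]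
    {f g : Ω → ℝ} (hf : StronglyMeasurable[m] f) (hfg : Integrable (f * g) μ)
    (hg : Integrable g μ) : ∫ ω, (f * μ[g|m]) ω ∂μ = ∫ ω, (f * g) ω ∂μ :=
  (integral_congr_ae (condExp_mul_of_stronglyMeasurable_left hf hfg hg)).symm.trans
    (integral_condExp hm)

theorem lintegral_rpow_condExp_mul_le_of_maximal_le {ι : Type*} [Preorder ι]
    {ℱ : Filtration ι m0} {p C : ℝ} (hp : 0 < p) (hC : 0 ≤ C) {v f : Ω → ℝ}
    (h : (∫⁻ ω, (⨆ i, ENNReal.ofReal |(μ[f|ℱ i]) ω|) ^ p * ENNReal.ofReal (v ω) ∂μ) ^ (1 / p)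
      ≤ ENNReal.ofReal C * (∫⁻ ω, ENNReal.ofReal (|f ω| ^ p) * ENNReal.ofReal (v ω) ∂μ) ^ (1 / p))
    (i : ι) :
    ∫⁻ ω, ENNReal.ofReal |(μ[f|ℱ i]) ω| ^ p * ENNReal.ofReal (v ω) ∂μ
      ≤ ENNReal.ofReal (C ^ p) * ∫⁻ ω, ENNReal.ofReal (|f ω| ^ p) * ENNReal.ofReal (v ω) ∂μ := by
  have h := ENNReal.rpow_le_rpow h hp.le
  rw [ENNReal.mul_rpow_of_nonneg _ _ hp.le, ← ENNReal.rpow_mul, ← ENNReal.rpow_mul,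
    one_div_mul_cancel hp.ne', ENNReal.rpow_one, ENNReal.rpow_one,
    ENNReal.ofReal_rpow_of_nonneg hC hp.le] at h
  refine le_trans (lintegral_mono fun ω => ?_) h
  gcongr
  exact le_iSup (fun j => ENNReal.ofReal |(μ[f|ℱ j]) ω|) i

theorem integral_indicator_rpow_condExp_mul_le (hm : m ≤ m0) {p K : ℝ} {v σ : Ω → ℝ}
    (hp : 0 < p) (hK : 0 ≤ K) (hv0 : 0 ≤ v) (hσ0 : 0 ≤ σ) (hv : AEStronglyMeasurable v μ)
    (hσ : Integrable σ μ) (hσv : ∀ ω, σ ω ^ p * v ω = σ ω) {S : Set Ω} (hS : MeasurableSet[m] S)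
    (hbound : ∫⁻ ω, ENNReal.ofReal |(μ[S.indicator σ|m]) ω| ^ p * ENNReal.ofReal (v ω) ∂μ
      ≤ ENNReal.ofReal K *
        ∫⁻ ω, ENNReal.ofReal (|S.indicator σ ω| ^ p) * ENNReal.ofReal (v ω) ∂μ) :
    Integrable (S.indicator (fun ω => μ[σ|m] ω ^ p) * v) μ ∧
      ∫ ω, (S.indicator (fun ω => μ[σ|m] ω ^ p) * v) ω ∂μ ≤ K * ∫ ω in S, σ ω ∂μ := by
  set G := S.indicator (fun ω => μ[σ|m] ω ^ p)
  have hGv0 : 0 ≤ᵐ[μ] G * v := by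
    filter_upwards [condExp_nonneg (m := m) (ae_of_all μ hσ0)] with ω hω
    exact mul_nonneg (Set.indicator_nonneg (fun ω _ => Real.rpow_nonneg hω _) ω) (hv0 ω)
  have hlhs : ∫⁻ ω, ENNReal.ofReal |(μ[S.indicator σ|m]) ω| ^ p * ENNReal.ofReal (v ω) ∂μ
      = ∫⁻ ω, ENNReal.ofReal ((G * v) ω) ∂μ := by
    refine lintegral_congr_ae ?_
    filter_upwards [condExp_indicator hσ hS, condExp_nonneg (m := m) (ae_of_all μ hσ0)]
      with ω hind hω
    by_cases hωS : ω ∈ S <;>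
      simp [G, hind, hωS, abs_of_nonneg hω, ENNReal.ofReal_rpow_of_nonneg hω hp.le,
        ENNReal.ofReal_mul (Real.rpow_nonneg hω _), ENNReal.zero_rpow_of_pos hp]
  have hrhs : ∫⁻ ω, ENNReal.ofReal (|S.indicator σ ω| ^ p) * ENNReal.ofReal (v ω) ∂μ
      = ENNReal.ofReal (∫ ω in S, σ ω ∂μ) := by
    rw [← integral_indicator (hm S hS), ofReal_integral_eq_lintegral_ofReal
      (hσ.indicator (hm S hS)) (ae_of_all μ (Set.indicator_nonneg fun ω _ => hσ0 ω))]
    refine lintegral_congr fun ω => ?_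
    by_cases hωS : ω ∈ S
    · rw [Set.indicator_of_mem hωS, abs_of_nonneg (hσ0 ω),
        ← ENNReal.ofReal_mul (Real.rpow_nonneg (hσ0 ω) _), hσv]
    · simp [hωS, Real.zero_rpow hp.ne']
  have hle : ∫⁻ ω, ENNReal.ofReal ((G * v) ω) ∂μ ≤ ENNReal.ofReal (K * ∫ ω in S, σ ω ∂μ) := by
    rw [ENNReal.ofReal_mul hK, ← hrhs, ← hlhs]
    exact hbound
  have hGv_meas : AEStronglyMeasurable (G * v) μ :=
    ((stronglyMeasurable_condExp.measurable.pow_const p).stronglyMeasurable.indicator hS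
      |>.mono hm).aestronglyMeasurable.mul hv
  refine ⟨⟨hGv_meas, (hasFiniteIntegral_iff_ofReal hGv0).2 (hle.trans_lt ENNReal.ofReal_lt_top)⟩,
    ?_⟩
  rw [integral_eq_lintegral_of_nonneg_ae hGv0 hGv_meas]
  exact ENNReal.toReal_le_of_le_ofReal
    (mul_nonneg hK (integral_nonneg fun ω => hσ0 ω)) hle

theorem ae_condExp_mul_condExp_rpow_le (hm : m ≤ m0) [SigmaFinite (μ.trim hm)] {p K : ℝ}
    (hp : 1 < p) (hK : 0 ≤ K) {v σ : Ω → ℝ} (hv0 : 0 ≤ v) (hσ0 : 0 ≤ σ) (hv : Integrable v μ)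
    (hσ : Integrable σ μ) (hσv : ∀ ω, σ ω ^ p * v ω = σ ω)
    (hbound : ∀ f, Integrable f μ →
      ∫⁻ ω, ENNReal.ofReal |(μ[f|m]) ω| ^ p * ENNReal.ofReal (v ω) ∂μ
        ≤ ENNReal.ofReal K * ∫⁻ ω, ENNReal.ofReal (|f ω| ^ p) * ENNReal.ofReal (v ω) ∂μ) :
    ∀ᵐ ω ∂μ, (μ[v|m]) ω * (μ[σ|m]) ω ^ (p - 1) ≤ K := by
  set W : Ω → ℝ := fun ω => (μ[σ|m]) ω ^ p * (μ[v|m]) ω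
  have htest (S : Set Ω) (hS : MeasurableSet[m] S) :=
    integral_indicator_rpow_condExp_mul_le hm (by linarith) hK hv0 hσ0 hv.1 hσ hσv hS
      (hbound _ (hσ.indicator (hm S hS)))
  have hG (S : Set Ω) (hS : MeasurableSet[m] S) :
      StronglyMeasurable[m] (S.indicator fun ω => (μ[σ|m]) ω ^ p) :=
    (stronglyMeasurable_condExp.measurable.pow_const p).stronglyMeasurable.indicator hS
  have hGW (S : Set Ω) : S.indicator (fun ω => (μ[σ|m]) ω ^ p) * μ[v|m] = S.indicator W := by
    ext ω
    exact (Set.indicator_mul_left S _ _).symm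
  have hW : Integrable W μ := by
    have := (htest .univ .univ).1.mul_condExp_of_stronglyMeasurable_left (hG .univ .univ) hv
    rwa [hGW, Set.indicator_univ] at this
  have hWle : W ≤ᵐ[μ] fun ω => K * (μ[σ|m]) ω := by
    refine ae_le_of_forall_setIntegral_le_of_stronglyMeasurable hm
      ((stronglyMeasurable_condExp.measurable.pow_const p).stronglyMeasurable.mul
        stronglyMeasurable_condExp) (stronglyMeasurable_condExp.const_mul K) hW
      (integrable_condExp.const_mul K) fun S hS => ?_
    calc ∫ ω in S, W ω ∂μ
        = ∫ ω, (S.indicator (fun ω => (μ[σ|m]) ω ^ p) * v) ω ∂μ := by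
          rw [← integral_indicator (hm S hS), ← hGW,
            integral_mul_condExp_of_stronglyMeasurable_left hm (hG S hS) (htest S hS).1 hv]
      _ ≤ K * ∫ ω in S, σ ω ∂μ := (htest S hS).2
      _ = ∫ ω in S, K * (μ[σ|m]) ω ∂μ := by
          rw [integral_const_mul, setIntegral_condExp hm hσ hS]
  filter_upwards [hWle, condExp_nonneg (m := m) (ae_of_all μ hσ0)] with ω hω hσω
  exact mul_rpow_sub_one_le_of_rpow_mul_le hp.ne' hσω hK hω

end MeasureTheory

/-- If the Doob maximal operator `M f = sup_i |E_i f|` satisfies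
`‖Mf‖_{L^p(v)} ≤ C ‖f‖_{L^p(v)}` for all `f` in the class `L`, then `v` is an `A_p`
weight; more precisely `E_i(v) · E_i(v^{1-p'})^{p-1} ≤ C^p` a.e. for every `i`, and in
particular the smallest `A_p` constant of `v` is at most `C^p`. -/
theorem stmt_0 {Ω : Type*} {m0 : MeasurableSpace Ω} (μ : Measure Ω) [SigmaFinite μ]
    (ℱ : Filtration ℤ m0) [∀ i : ℤ, SigmaFinite (μ.trim (ℱ.le i))]
    (p p' : ℝ) (hp : 1 < p) (hp' : p' = p / (p - 1))
    (v : Ω → ℝ) (hv0 : 0 ≤ v)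
    (hvL : ∀ i : ℤ, ∀ s : Set Ω, MeasurableSet[ℱ i] s → μ s < ⊤ → IntegrableOn v s μ)
    (hσL : ∀ i : ℤ, ∀ s : Set Ω, MeasurableSet[ℱ i] s → μ s < ⊤ →
      IntegrableOn (fun ω => v ω ^ (1 - p')) s μ)
    (C : ℝ) (hC : 0 < C)
    (hbound : ∀ f : Ω → ℝ,
      (∀ i : ℤ, ∀ s : Set Ω, MeasurableSet[ℱ i] s → μ s < ⊤ → IntegrableOn f s μ) →
      (∫⁻ ω, (⨆ i : ℤ, ENNReal.ofReal |(μ[f|ℱ i]) ω|) ^ p * ENNReal.ofReal (v ω) ∂μ) ^ (1 / p)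
        ≤ ENNReal.ofReal C *
          (∫⁻ ω, ENNReal.ofReal (|f ω| ^ p) * ENNReal.ofReal (v ω) ∂μ) ^ (1 / p)) :
    (∀ i : ℤ, ∀ᵐ ω ∂μ,
      (μ[v|ℱ i]) ω * ((μ[fun ω => v ω ^ (1 - p')|ℱ i]) ω) ^ (p - 1) ≤ C ^ p) ∧
    ∀ Cv : ℝ,
      ((∀ i : ℤ, ∀ᵐ ω ∂μ,
          (μ[v|ℱ i]) ω * ((μ[fun ω => v ω ^ (1 - p')|ℱ i]) ω) ^ (p - 1) ≤ Cv) ∧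
        ∀ C' : ℝ,
          (∀ i : ℤ, ∀ᵐ ω ∂μ,
            (μ[v|ℱ i]) ω * ((μ[fun ω => v ω ^ (1 - p')|ℱ i]) ω) ^ (p - 1) ≤ C') →
          Cv ≤ C') →
      Cv ≤ C ^ p := by
  have hpq : p.HolderConjugate p' := (Real.holderConjugate_iff_eq_conjExponent hp).2 hp'
  have hAp (i : ℤ) : ∀ᵐ ω ∂μ,
      (μ[v|ℱ i]) ω * ((μ[fun ω => v ω ^ (1 - p')|ℱ i]) ω) ^ (p - 1) ≤ C ^ p := by
    have hCp : 0 ≤ C ^ p := Real.rpow_nonneg hC.le p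
    -- `μ[f|m] = 0` for non-integrable `f`, which makes these two cases trivial.
    by_cases hv : Integrable v μ
    swap
    · filter_upwards with ω
      simpa [condExp_of_not_integrable hv] using hCp
    by_cases hσ : Integrable (fun ω => v ω ^ (1 - p')) μ
    swap
    · filter_upwards with ω
      simpa [condExp_of_not_integrable hσ, Real.zero_rpow hpq.sub_one_ne_zero] using hCp
    refine ae_condExp_mul_condExp_rpow_le (ℱ.le i) hp hCp hv0
      (fun ω => Real.rpow_nonneg (hv0 ω) _) hv hσ (fun ω => hpq.rpow_one_sub_rpow_mul_self (hv0 ω))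
      fun f hf => ?_
    exact lintegral_rpow_condExp_mul_le_of_maximal_le (by linarith) hC.le
      (hbound f fun _ _ _ _ => hf.integrableOn) i
  exact ⟨hAp, fun Cv hCv => hCv.2 _ hAp⟩
end

section
/- Let h ∈ L be nonnegative, a > 1, i ∈ ℤ, k ∈ ℤ, and Ω₀ ∈ F_i with μ(Ω₀) < ∞ on a σ-finite filtered measure space. Set P₀ = {ω ∈ Ω₀ : a^{k-1} < E_i(h)(ω) ≤ a^k}, define the stopping time τ(ω) = inf{ j ≥ i : E_j(h)(ω) > a^{k+1} } (with τ(ω) = ∞ if no such j exists), and set E(P₀) = P₀ ∩ {τ = ∞}. Then μ(P₀) ≤ (a/(a-1)) · μ(E(P₀)). -/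
/-!
Doob's weak-type argument for the martingale `E_{i+n}(h)`, `n ∈ ℕ`. Split `P₀ \ E(P₀)` according
to the first time `n` at which `E_{i+n}(h) > a^{k+1}`; each piece is `F_{i+n}`-measurable, so on it
`∫ h = ∫ E_{i+n}(h) ≥ a^{k+1} μ(piece)`. Summing and using `h ≥ 0`,
`a^{k+1} μ(P₀ \ E(P₀)) ≤ ∫_{P₀} h = ∫_{P₀} E_i(h) ≤ a^k μ(P₀)`, i.e. `a μ(P₀ \ E(P₀)) ≤ μ(P₀)`,
which rearranges to `(a - 1) μ(P₀) ≤ a μ(E(P₀))`.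
-/

open MeasureTheory

theorem Int.forall_ge_iff_forall_add_natCast {p : ℤ → Prop} {i : ℤ} :
    (∀ j, i ≤ j → p j) ↔ ∀ n : ℕ, p (i + n) := by
  refine ⟨fun hp n => hp _ (le_add_of_nonneg_right n.cast_nonneg), fun hp j hij => ?_⟩
  obtain ⟨n, rfl⟩ := Int.le.dest hij
  exact hp n

namespace MeasureTheory

variable {Ω : Type*} {m0 : MeasurableSpace Ω}

def Filtration.precomp {ι κ : Type*} [Preorder ι] [Preorder κ] (ℱ : Filtration ι m0)
    (f : κ → ι) (hf : Monotone f) : Filtration κ m0 where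
  seq k := ℱ (f k)
  mono' _ _ hkl := ℱ.mono (hf hkl)
  le' k := ℱ.le (f k)

theorem Filtration.measurableSet_disjointed {ι : Type*} [Preorder ι] [LocallyFiniteOrderBot ι]
    (ℱ : Filtration ι m0) {t : ι → Set Ω} (ht : ∀ i, MeasurableSet[ℱ i] (t i)) (i : ι) :
    MeasurableSet[ℱ i] (disjointed t i) := by
  rw [disjointed_eq_inter_compl]
  exact (ht i).inter <| (Set.finite_Iio i).measurableSet_biInter fun j hj =>
    (ℱ.mono (le_of_lt hj) _ (ht j)).compl

theorem setIntegral_iUnion_mono {ι : Type*} [Countable ι] {μ : Measure Ω} {s : ι → Set Ω}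
    {f g : Ω → ℝ} (hs : ∀ i, MeasurableSet (s i)) (hd : Pairwise (Function.onFun Disjoint s))
    (hf : IntegrableOn f (⋃ i, s i) μ) (hg : IntegrableOn g (⋃ i, s i) μ)
    (hfg : ∀ i, ∫ x in s i, f x ∂μ ≤ ∫ x in s i, g x ∂μ) :
    ∫ x in ⋃ i, s i, f x ∂μ ≤ ∫ x in ⋃ i, s i, g x ∂μ :=
  hasSum_le hfg (hasSum_integral_iUnion hs hd hf) (hasSum_integral_iUnion hs hd hg)

theorem measure_le_ofReal_div_sub_one_mul_measure_diff {μ : Measure Ω} {s u : Set Ω} {a : ℝ}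
    (ha : 1 < a) (hu : MeasurableSet u) (hμs : μ s ≠ ⊤)
    (hsu : a * μ.real (s ∩ u) ≤ μ.real s) :
    μ s ≤ ENNReal.ofReal (a / (a - 1)) * μ (s \ u) := by
  have hμsu : μ (s \ u) ≠ ⊤ := measure_ne_top_of_subset Set.sdiff_subset hμs
  have hsplit : μ.real (s ∩ u) + μ.real (s \ u) = μ.real s := measureReal_inter_add_sdiff hu hμs
  have hreal : μ.real s ≤ a / (a - 1) * μ.real (s \ u) := by
    rw [div_mul_eq_mul_div, le_div_iff₀ (by linarith)]
    nlinarith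
  rw [← ofReal_measureReal hμs, ← ofReal_measureReal hμsu,
    ← ENNReal.ofReal_mul (div_nonneg (by linarith) (by linarith))]
  exact ENNReal.ofReal_le_ofReal hreal

section CondExp

variable {m : MeasurableSpace Ω} {μ : Measure[m0] Ω} {h : Ω → ℝ} {s : Set Ω} {c : ℝ}

theorem mul_measureReal_le_setIntegral_of_le_condExp (hm : m ≤ m0) [SigmaFinite (μ.trim hm)]
    (hh : Integrable h μ) (hs : MeasurableSet[m] s) (hμs : μ s ≠ ⊤)
    (hc : ∀ ω ∈ s, c ≤ μ[h|m] ω) : c * μ.real s ≤ ∫ ω in s, h ω ∂μ := by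
  rw [← setIntegral_condExp hm hh hs]
  exact setIntegral_ge_of_const_le_real (hm s hs) hμs hc integrable_condExp.integrableOn

theorem setIntegral_le_mul_measureReal_of_condExp_le (hm : m ≤ m0) [SigmaFinite (μ.trim hm)]
    (hh : Integrable h μ) (hs : MeasurableSet[m] s) (hμs : μ s ≠ ⊤)
    (hc : ∀ ω ∈ s, μ[h|m] ω ≤ c) : ∫ ω in s, h ω ∂μ ≤ c * μ.real s := by
  rw [← setIntegral_condExp hm hh hs, mul_comm, ← smul_eq_mul, ← setIntegral_const]
  exact setIntegral_mono_on integrable_condExp.integrableOn (integrableOn_const hμs) (hm s hs) hc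

theorem mul_measureReal_inter_le_setIntegral_of_exists_lt_condExp {𝒢 : Filtration ℕ m0}
    [∀ n, SigmaFinite (μ.trim (𝒢.le n))] (hh : Integrable h μ) (hs : MeasurableSet[𝒢 0] s)
    (hμs : μ s ≠ ⊤) (c : ℝ) :
    c * μ.real (s ∩ {ω | ∃ n, c < μ[h|𝒢 n] ω}) ≤
      ∫ ω in s ∩ {ω | ∃ n, c < μ[h|𝒢 n] ω}, h ω ∂μ := by
  set t : ℕ → Set Ω := fun n => {ω | c < μ[h|𝒢 n] ω}
  have ht n : MeasurableSet[𝒢 n] (t n) :=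
    measurableSet_lt measurable_const stronglyMeasurable_condExp.measurable
  have hpiece n : MeasurableSet[𝒢 n] (s ∩ disjointed t n) :=
    (𝒢.mono n.zero_le _ hs).inter (𝒢.measurableSet_disjointed ht n)
  have hsplit : s ∩ {ω | ∃ n, c < μ[h|𝒢 n] ω} = ⋃ n, s ∩ disjointed t n := by
    rw [← Set.inter_iUnion, iUnion_disjointed, Set.ofPred_exists]
  have hμU : μ (⋃ n, s ∩ disjointed t n) ≠ ⊤ :=
    measure_ne_top_of_subset (Set.iUnion_subset fun _ => Set.inter_subset_left) hμs
  rw [hsplit, mul_comm, ← smul_eq_mul, ← setIntegral_const]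
  refine setIntegral_iUnion_mono (fun n => 𝒢.le n _ (hpiece n))
    ((disjoint_disjointed t).mono fun _ _ => Disjoint.mono inf_le_right inf_le_right)
    (integrableOn_const hμU) hh.integrableOn fun n => ?_
  rw [setIntegral_const, smul_eq_mul, mul_comm]
  exact mul_measureReal_le_setIntegral_of_le_condExp (𝒢.le n) hh (hpiece n)
    (measure_ne_top_of_subset Set.inter_subset_left hμs)
    fun ω hω => (disjointed_subset t n hω.2).le

end CondExp

end MeasureTheory

/-- On a σ-finite filtered measure space, with `P₀ = {a^{k-1} < E_i h ≤ a^k} ∩ Ω₀` and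
`E(P₀) = P₀ ∩ {τ = ∞}` where `τ = inf{j ≥ i : E_j h > a^{k+1}}`, one has
`μ(P₀) ≤ (a/(a-1)) μ(E(P₀))`. -/
theorem stmt_5 {Ω : Type*} {m0 : MeasurableSpace Ω} (μ : Measure Ω) [SigmaFinite μ]
    (ℱ : Filtration ℤ m0) [∀ i : ℤ, SigmaFinite (μ.trim (ℱ.le i))]
    (h : Ω → ℝ) (hh0 : 0 ≤ h)
    (hhL : ∀ i : ℤ, ∀ s : Set Ω, MeasurableSet[ℱ i] s → μ s < ⊤ → IntegrableOn h s μ)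
    (a : ℝ) (ha : 1 < a) (i k : ℤ)
    (Ω₀ : Set Ω) (hΩ₀ : MeasurableSet[ℱ i] Ω₀) (hΩ₀fin : μ Ω₀ < ⊤)
    (P₀ : Set Ω)
    (hP₀ : P₀ = {ω ∈ Ω₀ | a ^ (k - 1) < (μ[h|ℱ i]) ω ∧ (μ[h|ℱ i]) ω ≤ a ^ k})
    (EP₀ : Set Ω)
    (hEP₀ : EP₀ = P₀ ∩ {ω | ∀ j : ℤ, i ≤ j → (μ[h|ℱ j]) ω ≤ a ^ (k + 1)}) :
    μ P₀ ≤ ENNReal.ofReal (a / (a - 1)) * μ EP₀ := by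
  have ha0 : 0 < a := by linarith
  have hcondExp := (stronglyMeasurable_condExp (f := h) (m := ℱ i) (μ := μ)).measurable
  have hPm : MeasurableSet[ℱ i] P₀ := hP₀ ▸
    hΩ₀.inter ((measurableSet_lt measurable_const hcondExp).inter
      (measurableSet_le hcondExp measurable_const))
  have hμP : μ P₀ ≠ ⊤ := (measure_mono (hP₀ ▸ Set.sep_subset _ _)).trans_lt hΩ₀fin |>.ne
  by_cases hh : Integrable h μ
  swap
  · -- Mathlib's conditional expectation of a non-integrable function is `0`.
    have hP₀_empty : P₀ = ∅ := by
      simp [hP₀, condExp_of_not_integrable hh, (zpow_pos ha0 _).le]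
    simp [hP₀_empty]
  set 𝒢 := ℱ.precomp (fun n : ℕ => i + n) fun _ _ hnm => by simpa using hnm
  have : ∀ n, SigmaFinite (μ.trim (𝒢.le n)) := fun n =>
    inferInstanceAs (SigmaFinite (μ.trim (ℱ.le (i + n))))
  set U := {ω | ∃ n, a ^ (k + 1) < μ[h|𝒢 n] ω}
  have hU : MeasurableSet U := by
    simp only [U, Set.ofPred_exists]
    exact MeasurableSet.iUnion fun n =>
      𝒢.le n _ (measurableSet_lt measurable_const stronglyMeasurable_condExp.measurable)
  have hEP₀U : EP₀ = P₀ \ U := by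
    rw [hEP₀, Set.sdiff_eq]
    congr 1
    ext ω
    simp only [U, Set.mem_ofPred_eq, Set.mem_compl_iff, not_exists, not_lt,
      Int.forall_ge_iff_forall_add_natCast]
    rfl
  rw [hEP₀U]
  refine measure_le_ofReal_div_sub_one_mul_measure_diff ha hU hμP ?_
  have hupper := setIntegral_le_mul_measureReal_of_condExp_le (ℱ.le i) hh hPm hμP
    fun ω hω => (hP₀ ▸ hω).2.2
  have hlower := mul_measureReal_inter_le_setIntegral_of_exists_lt_condExp (𝒢 := 𝒢) hh
    (show MeasurableSet[ℱ (i + (0 : ℕ))] P₀ by rwa [Nat.cast_zero, add_zero]) hμP (a ^ (k + 1))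
  have hmono : ∫ ω in P₀ ∩ U, h ω ∂μ ≤ ∫ ω in P₀, h ω ∂μ :=
    setIntegral_mono_set hh.integrableOn (.of_forall hh0) Set.inter_subset_left.eventuallyLE
  refine le_of_mul_le_mul_left ?_ (zpow_pos ha0 k)
  rw [← mul_assoc, ← zpow_add_one₀ ha0.ne']
  exact hlower.trans (hmono.trans hupper)
end

section
/- Let h ∈ L be nonnegative, a > 1, i ∈ ℤ, k ∈ ℤ, and Ω₀ ∈ F_i with μ(Ω₀) < ∞ on a σ-finite filtered measure space. Set P₀ = {ω ∈ Ω₀ : a^{k-1} < E_i(h)(ω) ≤ a^k}, τ(ω) = inf{ j ≥ i : E_j(h)(ω) > a^{k+1} } (τ = ∞ if no such j exists), and E(P₀) = P₀ ∩ {τ = ∞}. Then the conditional sparsity inequality χ_{P₀} ≤ (a/(a-1)) · E_i(χ_{E(P₀)}) · χ_{P₀} holds μ-almost everywhere; equivalently, E_i(χ_{E(P₀)}) ≥ (a-1)/a μ-a.e. on P₀. -/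
/-!
Let `τ` be the first time `j ≥ i` at which `E_j h` exceeds `c = a ^ (k + 1)`. Cutting
`{τ < ∞}` into the first-passage sets `{τ = j}`, each of which lies in `F_j`, gives for every
`T ∈ F_i` on which `E_i h ≤ a ^ k` the maximal-type estimate
`c μ(T ∩ {τ < ∞}) ≤ ∫_{T ∩ {τ < ∞}} h ≤ ∫_T h = ∫_T E_i h ≤ a ^ k μ(T)`.
Hence `μ(T ∩ {τ = ∞}) ≥ (1 - 1/a) μ(T)` for all such `T`, which is the integrated form of
`E_i(χ_{E(P₀)}) ≥ 1 - 1/a` on `P₀`.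
-/

open MeasureTheory Set

open scoped ENNReal

section

variable {Ω : Type*} {m0 : MeasurableSpace Ω} {μ : Measure Ω}

lemma measurableSet_disjointed_of_monotone {m : ℕ → MeasurableSpace Ω} (hm : Monotone m)
    {U : ℕ → Set Ω} (hU : ∀ n, MeasurableSet[m n] (U n)) (n : ℕ) :
    MeasurableSet[m n] (disjointed U n) := by
  rw [disjointed_eq_inter_compl]
  exact (hU n).inter <| MeasurableSet.iInter fun j => MeasurableSet.iInter fun hj =>
    (hm hj.le _ (hU j)).compl

lemma ae_le_condExp_of_forall_setIntegral_le {m : MeasurableSpace Ω} (hm : m ≤ m0)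
    [SigmaFinite (μ.trim hm)] {f g : Ω → ℝ} (hf : Integrable f μ)
    (hg : StronglyMeasurable[m] g) (hgi : Integrable g μ)
    (hgf : ∀ s, MeasurableSet[m] s → μ s < ∞ → ∫ x in s, g x ∂μ ≤ ∫ x in s, f x ∂μ) :
    g ≤ᵐ[μ] μ[f|m] := by
  refine ae_le_of_ae_le_trim (hm := hm) <|
    ae_le_of_forall_setIntegral_le (hgi.trim hm hg) (integrable_condExp.trim hm
      stronglyMeasurable_condExp) fun s hs hsfin => ?_
  rw [trim_measurableSet_eq hm hs] at hsfin
  rw [← setIntegral_trim hm hg hs, ← setIntegral_trim hm stronglyMeasurable_condExp hs,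
    setIntegral_condExp hm hf hs]
  exact hgf s hs hsfin

lemma mul_measureReal_iUnion_le_setIntegral {m : ℕ → MeasurableSpace Ω} (hm : Monotone m)
    (hm0 : ∀ n, m n ≤ m0) [∀ n, SigmaFinite (μ.trim (hm0 n))] {f : Ω → ℝ}
    (hf : Integrable f μ) {c : ℝ} {U : ℕ → Set Ω} (hU : ∀ n, MeasurableSet[m n] (U n))
    (hcU : ∀ n, ∀ ω ∈ U n, c ≤ μ[f|m n] ω) (hUfin : μ (⋃ n, U n) ≠ ∞) :
    c * μ.real (⋃ n, U n) ≤ ∫ ω in ⋃ n, U n, f ω ∂μ := by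
  have hB : ∀ n, MeasurableSet[m n] (disjointed U n) :=
    measurableSet_disjointed_of_monotone hm hU
  have hB0 : ∀ n, MeasurableSet (disjointed U n) := fun n => hm0 n _ (hB n)
  have hpiece : ∀ n, ∫ _ in disjointed U n, c ∂μ ≤ ∫ ω in disjointed U n, f ω ∂μ := by
    intro n
    have hBfin : μ (disjointed U n) ≠ ∞ := ne_top_of_le_ne_top hUfin
      (measure_mono ((disjointed_subset U n).trans (subset_iUnion U n)))
    calc ∫ _ in disjointed U n, c ∂μ
        ≤ ∫ ω in disjointed U n, μ[f|m n] ω ∂μ :=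
          setIntegral_mono_on (integrableOn_const hBfin) integrable_condExp.integrableOn
            (hB0 n) fun ω hω => hcU n ω (disjointed_subset U n hω)
      _ = ∫ ω in disjointed U n, f ω ∂μ := setIntegral_condExp (hm0 n) hf (hB n)
  rw [mul_comm, ← smul_eq_mul, ← setIntegral_const, ← iUnion_disjointed]
  rw [← iUnion_disjointed] at hUfin
  exact hasSum_le hpiece
    (hasSum_integral_iUnion hB0 (disjoint_disjointed U) (integrableOn_const hUfin))
    (hasSum_integral_iUnion hB0 (disjoint_disjointed U) hf.integrableOn)

/-- The event `{τ = ∞}`, where `τ` is the first time `j ≥ i` with `μ[f|ℱ j] > c`. -/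
def condExpStaysBelow (μ : Measure Ω) (ℱ : Filtration ℤ m0) (f : Ω → ℝ) (i : ℤ) (c : ℝ) :
    Set Ω :=
  {ω | ∀ j, i ≤ j → μ[f|ℱ j] ω ≤ c}

section StaysBelow

variable (ℱ : Filtration ℤ m0) {f : Ω → ℝ} {i : ℤ} {c : ℝ}

lemma measurableSet_condExpStaysBelow : MeasurableSet (condExpStaysBelow μ ℱ f i c) := by
  simp only [condExpStaysBelow, ofPred_forall]
  exact MeasurableSet.iInter fun j => MeasurableSet.iInter fun _ =>
    measurableSet_le (stronglyMeasurable_condExp.mono (ℱ.le j)).measurable measurable_const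

lemma diff_condExpStaysBelow_eq_iUnion (T : Set Ω) :
    T \ condExpStaysBelow μ ℱ f i c = ⋃ n : ℕ, T ∩ {ω | c < μ[f|ℱ (i + n)] ω} := by
  ext ω
  simp only [condExpStaysBelow, mem_sdiff, mem_ofPred_eq, mem_iUnion, mem_inter_iff, not_forall,
    not_le, exists_prop]
  refine ⟨fun ⟨hT, j, hij, hj⟩ => ⟨(j - i).toNat, hT, ?_⟩,
    fun ⟨n, hT, hn⟩ => ⟨hT, i + n, by omega, hn⟩⟩
  rwa [show i + ((j - i).toNat : ℤ) = j by omega]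

variable [∀ j, SigmaFinite (μ.trim (ℱ.le j))]

lemma mul_measureReal_diff_condExpStaysBelow_le_setIntegral (hf : Integrable f μ) {T : Set Ω}
    (hT : MeasurableSet[ℱ i] T) (hTfin : μ T ≠ ∞) :
    c * μ.real (T \ condExpStaysBelow μ ℱ f i c) ≤
      ∫ ω in T \ condExpStaysBelow μ ℱ f i c, f ω ∂μ := by
  have hmono : Monotone fun n : ℕ => ℱ (i + n) := fun n n' hnn' => ℱ.mono (by omega)
  rw [diff_condExpStaysBelow_eq_iUnion]
  refine mul_measureReal_iUnion_le_setIntegral hmono (fun n => ℱ.le _) hf (fun n => ?_)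
    (fun n ω hω => hω.2.le) ?_
  · exact (ℱ.mono (by omega) _ hT).inter
      (measurableSet_lt measurable_const stronglyMeasurable_condExp.measurable)
  · exact ne_top_of_le_ne_top hTfin (measure_mono (iUnion_subset fun n => inter_subset_left))

lemma mul_measureReal_diff_condExpStaysBelow_le (hf : Integrable f μ) (hf0 : 0 ≤ f)
    {T : Set Ω} (hT : MeasurableSet[ℱ i] T) (hTfin : μ T ≠ ∞) {b : ℝ}
    (hTb : ∀ ω ∈ T, μ[f|ℱ i] ω ≤ b) :
    c * μ.real (T \ condExpStaysBelow μ ℱ f i c) ≤ b * μ.real T := by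
  have hT0 : MeasurableSet T := ℱ.le i _ hT
  calc c * μ.real (T \ condExpStaysBelow μ ℱ f i c)
      ≤ ∫ ω in T \ condExpStaysBelow μ ℱ f i c, f ω ∂μ :=
        mul_measureReal_diff_condExpStaysBelow_le_setIntegral ℱ hf hT hTfin
    _ ≤ ∫ ω in T, f ω ∂μ :=
        setIntegral_mono_set hf.integrableOn (ae_of_all _ hf0) (ae_of_all _ sdiff_subset)
    _ = ∫ ω in T, μ[f|ℱ i] ω ∂μ := (setIntegral_condExp (ℱ.le i) hf hT).symm
    _ ≤ ∫ _ in T, b ∂μ :=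
        setIntegral_mono_on integrable_condExp.integrableOn (integrableOn_const hTfin) hT0 hTb
    _ = b * μ.real T := by rw [setIntegral_const, smul_eq_mul, mul_comm]

theorem indicator_le_condExp_indicator_inter_condExpStaysBelow (hf : Integrable f μ)
    (hf0 : 0 ≤ f) {P : Set Ω} (hP : MeasurableSet[ℱ i] P) (hPfin : μ P ≠ ∞) {b : ℝ}
    (hb : 0 < b) (hPb : ∀ ω ∈ P, μ[f|ℱ i] ω ≤ b) {a : ℝ} (ha : 0 < a) :
    P.indicator (fun _ => 1 - a⁻¹) ≤ᵐ[μ]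
      μ[(P ∩ condExpStaysBelow μ ℱ f i (a * b)).indicator (fun _ => (1 : ℝ))|ℱ i] := by
  set G := condExpStaysBelow μ ℱ f i (a * b)
  have hP0 : MeasurableSet P := ℱ.le i _ hP
  have hG : MeasurableSet G := measurableSet_condExpStaysBelow ℱ
  have hPG : MeasurableSet (P ∩ G) := hP0.inter hG
  have hPGfin : μ (P ∩ G) ≠ ∞ := ne_top_of_le_ne_top hPfin (measure_mono inter_subset_left)
  refine ae_le_condExp_of_forall_setIntegral_le (ℱ.le i)
    ((integrableOn_const hPGfin).integrable_indicator hPG) (stronglyMeasurable_const.indicator hP)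
    ((integrableOn_const hPfin).integrable_indicator hP0) fun S hS _ => ?_
  set T := S ∩ P
  have hTfin : μ T ≠ ∞ := ne_top_of_le_ne_top hPfin (measure_mono inter_subset_right)
  have hsparse : μ.real (T \ G) ≤ μ.real T / a := by
    have := mul_measureReal_diff_condExpStaysBelow_le ℱ hf hf0 (hS.inter hP) hTfin
      (c := a * b) fun ω hω => hPb ω hω.2
    rw [le_div_iff₀ ha]
    exact le_of_mul_le_mul_left (by linarith) hb
  have hsplit : μ.real (T ∩ G) + μ.real (T \ G) = μ.real T := measureReal_inter_add_sdiff hG hTfin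
  rw [setIntegral_indicator hP0, setIntegral_indicator hPG, setIntegral_const, setIntegral_const,
    ← inter_assoc, smul_eq_mul, smul_eq_mul, mul_one]
  calc μ.real T * (1 - a⁻¹) = μ.real T - μ.real T / a := by ring
    _ ≤ μ.real (T ∩ G) := by linarith

end StaysBelow

end

/-- Conditional sparsity of the principal set construction: with
`P₀ = {a^{k-1} < E_i h ≤ a^k} ∩ Ω₀` and `E(P₀) = P₀ ∩ {τ = ∞}` where
`τ = inf{j ≥ i : E_j h > a^{k+1}}`, one has
`χ_{P₀} ≤ (a/(a-1)) · E_i(χ_{E(P₀)}) · χ_{P₀}` μ-a.e. -/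
theorem stmt_6 {Ω : Type*} {m0 : MeasurableSpace Ω} (μ : Measure Ω) [SigmaFinite μ]
    (ℱ : Filtration ℤ m0) [∀ i : ℤ, SigmaFinite (μ.trim (ℱ.le i))]
    (h : Ω → ℝ) (hh0 : 0 ≤ h)
    (hhL : ∀ i : ℤ, ∀ s : Set Ω, MeasurableSet[ℱ i] s → μ s < ⊤ → IntegrableOn h s μ)
    (a : ℝ) (ha : 1 < a) (i k : ℤ)
    (Ω₀ : Set Ω) (hΩ₀ : MeasurableSet[ℱ i] Ω₀) (hΩ₀fin : μ Ω₀ < ⊤)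
    (P₀ : Set Ω)
    (hP₀ : P₀ = {ω ∈ Ω₀ | a ^ (k - 1) < (μ[h|ℱ i]) ω ∧ (μ[h|ℱ i]) ω ≤ a ^ k})
    (EP₀ : Set Ω)
    (hEP₀ : EP₀ = P₀ ∩ {ω | ∀ j : ℤ, i ≤ j → (μ[h|ℱ j]) ω ≤ a ^ (k + 1)}) :
    ∀ᵐ ω ∂μ,
      P₀.indicator (fun _ => (1 : ℝ)) ω ≤
        a / (a - 1) * (μ[EP₀.indicator (fun _ => (1 : ℝ))|ℱ i]) ω *
          P₀.indicator (fun _ => (1 : ℝ)) ω := by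
  have ha0 : 0 < a := by linarith
  obtain rfl | ⟨ω₀, hω₀⟩ := P₀.eq_empty_or_nonempty
  · simp
  -- `μ[h|ℱ i]` is junk `0` for non-integrable `h`, which would make `P₀` empty
  have hint : Integrable h μ := by
    by_contra hint
    rw [hP₀, condExp_of_not_integrable hint] at hω₀
    exact (zpow_pos ha0 _).not_gt hω₀.2.1
  have hcondExp : Measurable[ℱ i] (μ[h|ℱ i]) := stronglyMeasurable_condExp.measurable
  have hP₀m : MeasurableSet[ℱ i] P₀ := hP₀ ▸
    hΩ₀.inter ((measurableSet_lt measurable_const hcondExp).inter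
      (measurableSet_le hcondExp measurable_const))
  have hP₀fin : μ P₀ ≠ ∞ := ne_top_of_le_ne_top hΩ₀fin.ne (measure_mono (hP₀ ▸ sep_subset _ _))
  have hEP₀' : EP₀ = P₀ ∩ condExpStaysBelow μ ℱ h i (a * a ^ k) := by
    rw [hEP₀, mul_comm, ← zpow_add_one₀ ha0.ne']
    rfl
  have hsparse := indicator_le_condExp_indicator_inter_condExpStaysBelow ℱ hint hh0 hP₀m hP₀fin
    (zpow_pos ha0 k) (fun ω hω => (hP₀ ▸ hω).2.2) ha0
  rw [← hEP₀'] at hsparse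
  filter_upwards [hsparse] with ω hω
  by_cases hωP : ω ∈ P₀
  · simp only [indicator_of_mem hωP, mul_one] at hω ⊢
    have ha1 : a - 1 ≠ 0 := (sub_pos.2 ha).ne'
    calc (1 : ℝ) = a / (a - 1) * (1 - a⁻¹) := by field_simp
      _ ≤ _ := by gcongr
  · simp [indicator_of_notMem hωP]
end

section
/- Let h ∈ L be nonnegative, a > 1, i ∈ ℤ, k ∈ ℤ, and Ω₀ ∈ F_i with μ(Ω₀) < ∞ on a σ-finite filtered measure space. Set P₀ = {ω ∈ Ω₀ : a^{k-1} < E_i(h)(ω) ≤ a^k}, τ(ω) = inf{ j ≥ i : E_j(h)(ω) > a^{k+1} } (τ = ∞ if no such j exists), and E(P₀) = P₀ ∩ {τ = ∞}. Then μ-a.e. on E(P₀) one has sup_{j ≥ i} E_j(h·χ_{P₀}) ≤ a^{k+1}. -/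
open MeasureTheory

section

variable {Ω : Type*} {m m0 : MeasurableSpace Ω} {μ : Measure Ω} {f : Ω → ℝ}

lemma condExp_indicator_le_condExp (hf : Integrable f μ) (hf0 : 0 ≤ f) {s : Set Ω}
    (hs : MeasurableSet s) : μ[s.indicator f|m] ≤ᵐ[μ] μ[f|m] :=
  condExp_mono (hf.indicator hs) hf
    (Filter.Eventually.of_forall (Set.indicator_le_self' fun x _ => hf0 x))

-- The conditional expectation of a non-integrable function is the junk value `0`.
lemma setOf_lt_condExp_eq_empty_of_not_integrable (hf : ¬Integrable f μ) {c : ℝ}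
    (hc : 0 ≤ c) : {x | c < μ[f|m] x} = ∅ := by
  simp [condExp_of_not_integrable hf, not_lt.2 hc]

end

/-- With `P₀ = {a^{k-1} < E_i h ≤ a^k} ∩ Ω₀` and `E(P₀) = P₀ ∩ {τ = ∞}` where
`τ = inf{j ≥ i : E_j h > a^{k+1}}`, μ-a.e. on `E(P₀)` one has
`sup_{j ≥ i} E_j(h χ_{P₀}) ≤ a^{k+1}`. -/
theorem stmt_7 {Ω : Type*} {m0 : MeasurableSpace Ω} (μ : Measure Ω) [SigmaFinite μ]
    (ℱ : Filtration ℤ m0) [∀ i : ℤ, SigmaFinite (μ.trim (ℱ.le i))]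
    (h : Ω → ℝ) (hh0 : 0 ≤ h)
    (hhL : ∀ i : ℤ, ∀ s : Set Ω, MeasurableSet[ℱ i] s → μ s < ⊤ → IntegrableOn h s μ)
    (a : ℝ) (ha : 1 < a) (i k : ℤ)
    (Ω₀ : Set Ω) (hΩ₀ : MeasurableSet[ℱ i] Ω₀) (hΩ₀fin : μ Ω₀ < ⊤)
    (P₀ : Set Ω)
    (hP₀ : P₀ = {ω ∈ Ω₀ | a ^ (k - 1) < (μ[h|ℱ i]) ω ∧ (μ[h|ℱ i]) ω ≤ a ^ k})
    (EP₀ : Set Ω)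
    (hEP₀ : EP₀ = P₀ ∩ {ω | ∀ j : ℤ, i ≤ j → (μ[h|ℱ j]) ω ≤ a ^ (k + 1)}) :
    ∀ᵐ ω ∂μ, ω ∈ EP₀ →
      ∀ j : ℤ, i ≤ j → (μ[P₀.indicator h|ℱ j]) ω ≤ a ^ (k + 1) := by
  have ha0 : 0 < a := one_pos.trans ha
  by_cases hint : Integrable h μ
  · have hP₀_meas : MeasurableSet P₀ := by
      have hE : Measurable[ℱ i] (μ[h|ℱ i]) := stronglyMeasurable_condExp.measurable
      rw [hP₀]
      exact ℱ.le i _ (hΩ₀.inter ((measurableSet_lt measurable_const hE).inter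
        (measurableSet_le hE measurable_const)))
    filter_upwards [ae_all_iff.2 fun j => condExp_indicator_le_condExp (m := ℱ j) hint hh0 hP₀_meas]
      with ω hω hmem j hij
    exact (hω j).trans ((hEP₀ ▸ hmem).2 j hij)
  · have hP₀_empty : P₀ = ∅ :=
      Set.eq_empty_of_subset_empty fun ω hω =>
        (setOf_lt_condExp_eq_empty_of_not_integrable hint (zpow_pos ha0 (k - 1)).le).subset
          ((hP₀ ▸ hω).2.1)
    filter_upwards with ω _ j _
    simpa [hP₀_empty, condExp_zero] using (zpow_pos ha0 (k + 1)).le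
end

section
/- Fix a real number p with 1 < p < ∞ and define φ_p(a) = a² · (a/(a-1))^{1/(p-1)} for real a > 1. Then φ_p attains its minimum over (1, ∞) at a₀ = (2p-1)/(2p-2); that is, for every a > 1, φ_p((2p-1)/(2p-2)) ≤ φ_p(a), and the minimum value equals ((2p-1)/(2p-2))² · (2p-1)^{1/(p-1)}. -/
open Real

/-!
With `m = 2p - 1` one has `m / (p - 1) = 2 + 1 / (p - 1)`, so
`φ_p(a) = (a ^ m / (a - 1)) ^ (1 / (p - 1))`. By Bernoulli's inequality applied to `a / a₀`,
`a ^ m / (a - 1)` is minimal on `(1, ∞)` at `a₀ = m / (m - 1)`, where `a₀ / (a₀ - 1) = m`.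
-/

theorem isMinOn_rpow_div_sub_one {m : ℝ} (hm : 1 < m) :
    IsMinOn (fun a : ℝ => a ^ m / (a - 1)) (Set.Ioi 1) (m / (m - 1)) := by
  intro a (ha : 1 < a)
  show (m / (m - 1)) ^ m / (m / (m - 1) - 1) ≤ a ^ m / (a - 1)
  have hm₁ : 0 < m - 1 := by linarith
  set q := m / (m - 1) with hq
  have hq₀ : 0 < q := by positivity
  have bernoulli : (m - 1) * (a - 1) * q ^ m ≤ a ^ m := by
    have h := one_add_mul_self_le_rpow_one_add (s := a / q - 1)
      (by linarith [div_pos (by linarith : (0 : ℝ) < a) hq₀]) hm.le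
    rwa [add_sub_cancel, div_rpow (by linarith) hq₀.le, le_div_iff₀ (by positivity),
      show 1 + m * (a / q - 1) = (m - 1) * (a - 1) by rw [hq]; field_simp; ring] at h
  have hq_sub_one : q - 1 = 1 / (m - 1) := by rw [hq]; field_simp; ring
  rw [hq_sub_one, div_div_eq_mul_div, div_one, le_div_iff₀ (by linarith)]
  linarith

theorem sq_mul_div_sub_one_rpow_eq {p a : ℝ} (hp : 1 < p) (ha : 1 < a) :
    a ^ 2 * (a / (a - 1)) ^ (1 / (p - 1)) = (a ^ (2 * p - 1) / (a - 1)) ^ (1 / (p - 1)) := by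
  have ha₀ : 0 < a := by linarith
  have hexp : (2 * p - 1) * (1 / (p - 1)) = 2 + 1 / (p - 1) := by
    field_simp [(by linarith : p - 1 ≠ 0)]; ring
  rw [div_rpow ha₀.le (by linarith), div_rpow (rpow_nonneg ha₀.le _) (by linarith),
    ← rpow_mul ha₀.le, hexp, rpow_add ha₀, rpow_two, mul_div_assoc]

/-- For `1 < p < ∞`, the function `φ_p(a) = a² (a/(a-1))^{1/(p-1)}` attains its minimum
over `(1, ∞)` at `a₀ = (2p-1)/(2p-2)`, and the minimum value is
`((2p-1)/(2p-2))² (2p-1)^{1/(p-1)}`. -/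
theorem stmt_9 (p : ℝ) (hp : 1 < p) (φ : ℝ → ℝ)
    (hφ : ∀ a : ℝ, φ a = a ^ 2 * (a / (a - 1)) ^ (1 / (p - 1))) :
    ((2 * p - 1) / (2 * p - 2)) ∈ Set.Ioi (1 : ℝ) ∧
    (∀ a : ℝ, 1 < a → φ ((2 * p - 1) / (2 * p - 2)) ≤ φ a) ∧
    φ ((2 * p - 1) / (2 * p - 2)) =
      ((2 * p - 1) / (2 * p - 2)) ^ 2 * (2 * p - 1) ^ (1 / (p - 1)) := by
  set m := 2 * p - 1
  rw [show 2 * p - 2 = m - 1 by ring]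
  have hm₁ : 1 < m := by linarith
  have ha₀ : 1 < m / (m - 1) := (one_lt_div (by linarith)).2 (by linarith)
  refine ⟨ha₀, fun a ha => ?_, ?_⟩
  · rw [hφ, hφ, sq_mul_div_sub_one_rpow_eq hp ha, sq_mul_div_sub_one_rpow_eq hp ha₀]
    have hp₁ : 0 < p - 1 := by linarith
    exact rpow_le_rpow (div_nonneg (rpow_nonneg (by linarith) _) (by linarith))
      (isMinOn_rpow_div_sub_one hm₁ ha) (by positivity)
  · rw [hφ, show m / (m - 1) / (m / (m - 1) - 1) = m by
      field_simp [(by linarith : m - 1 ≠ 0)]; ring]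
end
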